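/- arXiv:2206.09379 — 2 statements merged into one kernel-verified Lean document; each statement's English description precedes it below -/
import Mathlib

section
/- Let τ, γ, λ > 0, U ∈ ℝ^{p×n}, V ∈ ℝ^{p×m}, and define Ψ(W) := (τ/2)‖U − VW‖² + (γ/2)‖W‖² for W ∈ ℝ^{m×n}. Let β ∈ (0, 1/(τ‖V‖₂² + γ)) and let {W^ℓ}_{ℓ≥0} be any sequence satisfying W^{ℓ+1} ∈ Prox_{βλ‖·‖_{0,2}}(W^ℓ − β∇Ψ(W^ℓ)) for all ℓ. Then the whole sequence {W^ℓ} converges to some W* ∈ ℝ^{m×n} satisfying W* ∈ Prox_{βλ‖·‖_{0,2}}(W* − β∇Ψ(W*)) (a P-stationary point of min_W Ψ(W) + λ‖W‖_{0,2}). -/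
set_option autoImplicit false

open Matrix

/-- Squared Frobenius norm of a matrix. -/
noncomputable def frobSq {m n : ℕ} (W : Matrix (Fin m) (Fin n) ℝ) : ℝ :=
  ∑ i, ∑ j, (W i j) ^ 2

/-- Frobenius norm of a matrix. -/
noncomputable def frobNorm {m n : ℕ} (W : Matrix (Fin m) (Fin n) ℝ) : ℝ :=
  Real.sqrt (frobSq W)

open Classical in
/-- `‖W‖_{0,2}`: the number of nonzero rows of `W`, as a real number. -/
noncomputable def norm02 {m n : ℕ} (W : Matrix (Fin m) (Fin n) ℝ) : ℝ :=
  ((Finset.univ.filter fun s : Fin m => W s ≠ 0).card : ℝ)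

/-- The proximal operator (as a set of global minimizers):
`Prox_β G (H) = argmin_W { G(W) + (1/(2β))‖W − H‖² }`. -/
def ProxSet {m n : ℕ} (β : ℝ) (G : Matrix (Fin m) (Fin n) ℝ → ℝ)
    (H : Matrix (Fin m) (Fin n) ℝ) : Set (Matrix (Fin m) (Fin n) ℝ) :=
  {W | ∀ Z : Matrix (Fin m) (Fin n) ℝ,
    G W + (1 / (2 * β)) * frobSq (W - H) ≤ G Z + (1 / (2 * β)) * frobSq (Z - H)}

/-- The objective `Ψ(W) = (τ/2)‖U − VW‖² + (γ/2)‖W‖²`. -/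
noncomputable def Psi {p m n : ℕ} (τ γ : ℝ) (U : Matrix (Fin p) (Fin n) ℝ)
    (V : Matrix (Fin p) (Fin m) ℝ) (W : Matrix (Fin m) (Fin n) ℝ) : ℝ :=
  (τ / 2) * frobSq (U - V * W) + (γ / 2) * frobSq W

/-- The gradient of `Ψ`, namely `∇Ψ(W) = τ Vᵀ(VW − U) + γ W`. -/
noncomputable def gradPsi {p m n : ℕ} (τ γ : ℝ) (U : Matrix (Fin p) (Fin n) ℝ)
    (V : Matrix (Fin p) (Fin m) ℝ) (W : Matrix (Fin m) (Fin n) ℝ) :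
    Matrix (Fin m) (Fin n) ℝ :=
  τ • (Vᵀ * (V * W - U)) + γ • W

/-- The spectral norm `‖V‖₂` of a matrix (largest singular value): the operator norm
of the induced linear map between Euclidean spaces. -/
noncomputable def specNorm {p m : ℕ} (V : Matrix (Fin p) (Fin m) ℝ) : ℝ :=
  ‖LinearMap.toContinuousLinearMap (Matrix.toEuclideanLin V)‖

open Filter Topology

/-!
With `L = τ‖V‖₂² + γ` and `βL < 1`, a proximal-gradient step decreases `Ψ + λ‖·‖_{0,2}` by at
least `(1/(2β) - L/2)‖W^{ℓ+1} - W^ℓ‖²`, so consecutive iterates become arbitrarily close. Every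
nonzero row of a point of `Prox_{βλ‖·‖_{0,2}}(H)` copies the corresponding row of `H` and has
squared norm at least `2βλ`; hence once the steps are shorter than `√(2βλ)` the set `S` of nonzero
rows is frozen. From then on the iteration is `W ↦ P_S(W - β∇Ψ(W))`, where `P_S` zeroes the rows
outside `S`; as `Ψ` is `γ`-strongly convex with `L`-Lipschitz gradient, this map is a contraction,
so the whole sequence converges. The graph of the prox of a lower semicontinuous function is
closed, which carries the inclusion `W^{ℓ+1} ∈ Prox(W^ℓ - β∇Ψ(W^ℓ))` to the limit.
-/

section SpecNorm

open scoped Matrix.Norms.L2Operator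

variable {p m : ℕ}

theorem specNorm_eq_l2_opNorm (V : Matrix (Fin p) (Fin m) ℝ) : specNorm V = ‖V‖ := rfl

theorem specNorm_nonneg (V : Matrix (Fin p) (Fin m) ℝ) : 0 ≤ specNorm V := norm_nonneg _

theorem specNorm_transpose (V : Matrix (Fin p) (Fin m) ℝ) : specNorm Vᵀ = specNorm V := by
  simpa [specNorm_eq_l2_opNorm] using Matrix.l2_opNorm_conjTranspose V

theorem sum_sq_mulVec_le (V : Matrix (Fin p) (Fin m) ℝ) (x : Fin m → ℝ) :
    ∑ i, (V *ᵥ x) i ^ 2 ≤ specNorm V ^ 2 * ∑ k, x k ^ 2 := by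
  have h := V.l2_opNorm_mulVec (WithLp.toLp 2 x)
  have h2 := pow_le_pow_left₀ (norm_nonneg _) h 2
  rw [mul_pow, EuclideanSpace.norm_sq_eq, EuclideanSpace.norm_sq_eq] at h2
  simpa [specNorm_eq_l2_opNorm] using h2

end SpecNorm

namespace Matrix

variable {l m n : Type*} [Fintype l] [Fintype m] [Fintype n]

open scoped Matrix.Norms.Frobenius

theorem frobenius_norm_sq_eq (A : Matrix m n ℝ) : ‖A‖ ^ 2 = ∑ i, ∑ j, A i j ^ 2 := by
  rw [frobenius_norm_def, ← Real.sqrt_eq_rpow, Real.sq_sqrt (by positivity)]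
  simp

@[reducible]
noncomputable def frobeniusInnerProductSpace : InnerProductSpace ℝ (Matrix m n ℝ) where
  inner A B := ∑ i, ∑ j, A i j * B i j
  norm_sq_eq_re_inner A := by simpa [sq] using frobenius_norm_sq_eq A
  conj_inner_symm A B := by simp [mul_comm]
  add_left A B C := by simp [add_mul, Finset.sum_add_distrib]
  smul_left A B r := by simp [Finset.mul_sum, mul_assoc]

attribute [local instance] frobeniusInnerProductSpace

theorem frobenius_inner_def (A B : Matrix m n ℝ) : inner ℝ A B = ∑ i, ∑ j, A i j * B i j := rfl

theorem frobenius_inner_transpose_mul (V : Matrix l m ℝ) (A : Matrix l n ℝ) (B : Matrix m n ℝ) :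
    inner ℝ (Vᵀ * A) B = inner ℝ A (V * B) := by
  simp only [frobenius_inner_def, mul_apply, transpose_apply, Finset.sum_mul, Finset.mul_sum]
  rw [Finset.sum_comm_cycle]
  refine Finset.sum_congr rfl fun i _ => ?_
  rw [Finset.sum_comm]
  exact Finset.sum_congr rfl fun j _ => Finset.sum_congr rfl fun k _ => by ring

theorem frobenius_norm_mul_le_specNorm {p q : ℕ} (V : Matrix (Fin p) (Fin q) ℝ)
    (A : Matrix (Fin q) n ℝ) : ‖V * A‖ ≤ specNorm V * ‖A‖ := by
  refine (pow_le_pow_iff_left₀ (norm_nonneg _)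
    (mul_nonneg (specNorm_nonneg V) (norm_nonneg _)) two_ne_zero).mp ?_
  rw [mul_pow, frobenius_norm_sq_eq, frobenius_norm_sq_eq, Finset.sum_comm,
    Finset.sum_comm (f := fun i j => A i j ^ 2), Finset.mul_sum]
  exact Finset.sum_le_sum fun j _ => sum_sq_mulVec_le V fun k => A k j

end Matrix

section InnerProductSpace

variable {E : Type*} [NormedAddCommGroup E] [InnerProductSpace ℝ E]

open scoped RealInnerProductSpace

theorem norm_sub_smul_sq_le {x a : E} {β γ L : ℝ} (hβ : 0 ≤ β) (hβL : β * L ≤ 2)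
    (hγ : γ * ‖x‖ ^ 2 ≤ ⟪x, a⟫) (hL : ‖a‖ ^ 2 ≤ L * ⟪x, a⟫) :
    ‖x - β • a‖ ^ 2 ≤ (1 - β * γ * (2 - β * L)) * ‖x‖ ^ 2 := by
  rw [norm_sub_sq_real, inner_smul_right, norm_smul, mul_pow, Real.norm_eq_abs, sq_abs]
  have hstep : 0 ≤ β * (2 - β * L) := mul_nonneg hβ (by linarith)
  nlinarith [mul_le_mul_of_nonneg_left hL (sq_nonneg β), mul_le_mul_of_nonneg_left hγ hstep]

theorem proxGrad_sufficient_decrease {f h : E → ℝ} {x y g : E} {β L : ℝ} (hβ : 0 < β)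
    (hf : f y ≤ f x + ⟪g, y - x⟫ + L / 2 * ‖y - x‖ ^ 2)
    (hy : h y + 1 / (2 * β) * ‖y - (x - β • g)‖ ^ 2
      ≤ h x + 1 / (2 * β) * ‖x - (x - β • g)‖ ^ 2) :
    f y + h y + (1 / (2 * β) - L / 2) * ‖y - x‖ ^ 2 ≤ f x + h x := by
  have hsplit : y - (x - β • g) = (y - x) + β • g := by abel
  rw [hsplit, sub_sub_cancel, norm_add_sq_real, inner_smul_right, real_inner_comm,
    norm_smul, Real.norm_eq_abs] at hy
  have hcancel : 1 / (2 * β) * (2 * (β * ⟪g, y - x⟫)) = ⟪g, y - x⟫ := by field_simp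
  linarith

end InnerProductSpace

theorem tendsto_zero_of_add_mul_le {F d : ℕ → ℝ} {c : ℝ} (hc : 0 < c) (hF : ∀ k, 0 ≤ F k)
    (hd : ∀ k, 0 ≤ d k) (hdec : ∀ k, F (k + 1) + c * d k ≤ F k) :
    Tendsto d atTop (𝓝 0) := by
  have hpartial : ∀ K, c * ∑ k ∈ Finset.range K, d k + F K ≤ F 0 := by
    intro K
    induction K with
    | zero => simp
    | succ K ih => rw [Finset.sum_range_succ, mul_add]; linarith [hdec K]
  refine (summable_of_sum_range_le (c := F 0 / c) hd fun K => ?_).tendsto_atTop_zero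
  rw [le_div_iff₀' hc]
  linarith [hpartial K, hF K]

theorem ContractingWith.exists_tendsto_of_eventually_eq {α : Type*} [MetricSpace α]
    [CompleteSpace α] {K : NNReal} {f : α → α} (hf : ContractingWith K f) {u : ℕ → α} {N : ℕ}
    (hu : ∀ k ≥ N, u (k + 1) = f (u k)) : ∃ x, Tendsto u atTop (𝓝 x) := by
  have : Nonempty α := ⟨u 0⟩
  have hiterate : ∀ j, u (j + N) = f^[j] (u N) := by
    intro j
    induction j with
    | zero => simp
    | succ j ih =>
      rw [Function.iterate_succ_apply', ← ih, add_right_comm, hu _ (Nat.le_add_left N j)]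
  refine ⟨ContractingWith.fixedPoint f hf, (tendsto_add_atTop_iff_nat N).mp ?_⟩
  simpa only [hiterate] using hf.tendsto_iterate_fixedPoint (u N)

section RowSparsity

variable {m n : ℕ}

-- Same decidability instance as in `norm02`, so that `norm02_eq_card_rowSupport` is `rfl`.
open Classical in
noncomputable def rowSupport (W : Matrix (Fin m) (Fin n) ℝ) : Finset (Fin m) :=
  Finset.univ.filter fun s => W s ≠ 0

theorem mem_rowSupport {W : Matrix (Fin m) (Fin n) ℝ} {s : Fin m} :
    s ∈ rowSupport W ↔ W s ≠ 0 := by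
  simp [rowSupport]

theorem norm02_eq_card_rowSupport (W : Matrix (Fin m) (Fin n) ℝ) :
    norm02 W = (rowSupport W).card := rfl

theorem rowSupport_updateRow_subset {W : Matrix (Fin m) (Fin n) ℝ} {s : Fin m} (hs : W s ≠ 0)
    (v : Fin n → ℝ) : rowSupport (W.updateRow s v) ⊆ rowSupport W := by
  intro t ht
  by_cases hts : t = s
  · exact mem_rowSupport.2 (hts ▸ hs)
  · rwa [mem_rowSupport, updateRow_ne hts, ← mem_rowSupport] at ht

theorem rowSupport_updateRow_zero (W : Matrix (Fin m) (Fin n) ℝ) (s : Fin m) :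
    rowSupport (W.updateRow s 0) = (rowSupport W).erase s := by
  ext t
  by_cases hts : t = s <;> simp [hts, mem_rowSupport]

theorem rowSq_le_frobSq (M : Matrix (Fin m) (Fin n) ℝ) (s : Fin m) :
    ∑ j, M s j ^ 2 ≤ frobSq M :=
  Finset.single_le_sum (f := fun i => ∑ j, M i j ^ 2)
    (fun _ _ => Finset.sum_nonneg fun _ _ => sq_nonneg _) (Finset.mem_univ s)

theorem frobSq_updateRow (M : Matrix (Fin m) (Fin n) ℝ) (s : Fin m) (v : Fin n → ℝ) :
    frobSq (M.updateRow s v) + ∑ j, M s j ^ 2 = frobSq M + ∑ j, v j ^ 2 := by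
  have hrest : ∑ i ∈ Finset.univ.erase s, ∑ j, M.updateRow s v i j ^ 2
      = ∑ i ∈ Finset.univ.erase s, ∑ j, M i j ^ 2 :=
    Finset.sum_congr rfl fun i hi => by rw [updateRow_ne (Finset.ne_of_mem_erase hi)]
  simp only [frobSq]
  rw [← Finset.add_sum_erase _ _ (Finset.mem_univ s),
    ← Finset.add_sum_erase _ _ (Finset.mem_univ s), hrest, updateRow_self]
  ring

theorem frobSq_updateRow_sub (W H : Matrix (Fin m) (Fin n) ℝ) (s : Fin m) (v : Fin n → ℝ) :
    frobSq (W.updateRow s v - H) + ∑ j, (W s j - H s j) ^ 2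
      = frobSq (W - H) + ∑ j, (v j - H s j) ^ 2 := by
  have h : W.updateRow s v - H = (W - H).updateRow s (v - H s) := by
    ext i j
    by_cases his : i = s
    · subst his; simp
    · simp [updateRow_ne his]
  simpa [h] using frobSq_updateRow (W - H) s (v - H s)

variable {β lam : ℝ} {W H : Matrix (Fin m) (Fin n) ℝ} {s : Fin m}

theorem ProxSet.row_eq (hβ : 0 < β) (hlam : 0 ≤ lam)
    (hW : W ∈ ProxSet β (fun W => lam * norm02 W) H) (hs : W s ≠ 0) : W s = H s := by
  -- Copying row `s` of `H` into `W` does not enlarge the support and removes that row's distance.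
  have hmin := hW (W.updateRow s (H s))
  have hcard : norm02 (W.updateRow s (H s)) ≤ norm02 W :=
    Nat.cast_le.2 (Finset.card_le_card (rowSupport_updateRow_subset hs _))
  have hfrob := frobSq_updateRow_sub W H s (H s)
  simp only [sub_self, ne_eq, OfNat.ofNat_ne_zero, not_false_eq_true, zero_pow,
    Finset.sum_const_zero, add_zero] at hfrob
  have hrow : ∑ j, (W s j - H s j) ^ 2 ≤ 0 := by
    have hc : 0 < 1 / (2 * β) := by positivity
    rw [← hfrob, mul_add] at hmin
    nlinarith [mul_le_mul_of_nonneg_left hcard hlam]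
  have hzero := (Finset.sum_eq_zero_iff_of_nonneg fun j _ => sq_nonneg (W s j - H s j)).1
    (le_antisymm hrow (Finset.sum_nonneg fun j _ => sq_nonneg _))
  funext j
  exact sub_eq_zero.1 (pow_eq_zero_iff two_ne_zero |>.1 (hzero j (Finset.mem_univ j)))

theorem ProxSet.le_rowSq (hβ : 0 < β) (hlam : 0 ≤ lam)
    (hW : W ∈ ProxSet β (fun W => lam * norm02 W) H) (hs : W s ≠ 0) :
    2 * β * lam ≤ ∑ j, W s j ^ 2 := by
  -- Zeroing row `s` saves `lam` in the penalty and costs `‖H s‖² / (2β)` in the distance.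
  have hmin := hW (W.updateRow s 0)
  have hcard : norm02 (W.updateRow s 0) + 1 = norm02 W := by
    rw [norm02_eq_card_rowSupport, norm02_eq_card_rowSupport, rowSupport_updateRow_zero,
      ← Nat.cast_add_one, Finset.card_erase_add_one (mem_rowSupport.2 hs)]
  have hfrob := frobSq_updateRow_sub W H s 0
  rw [row_eq hβ hlam hW hs] at hfrob ⊢
  simp only [sub_self, ne_eq, OfNat.ofNat_ne_zero, not_false_eq_true, zero_pow,
    Finset.sum_const_zero, add_zero, Pi.zero_apply, zero_sub, even_two, Even.neg_pow] at hfrob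
  dsimp only at hmin
  rw [hfrob, ← hcard, mul_add, mul_add] at hmin
  have hlam_le : lam ≤ 1 / (2 * β) * ∑ j, H s j ^ 2 := by linarith
  rwa [one_div_mul_eq_div, le_div_iff₀ (by positivity), mul_comm] at hlam_le

theorem frobSq_sub_comm (X Y : Matrix (Fin m) (Fin n) ℝ) : frobSq (X - Y) = frobSq (Y - X) := by
  unfold frobSq
  exact Finset.sum_congr rfl fun i _ => Finset.sum_congr rfl fun j _ => by
    simp only [Matrix.sub_apply]; ring

theorem ne_zero_of_frobSq_sub_lt {X Y : Matrix (Fin m) (Fin n) ℝ} {c : ℝ}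
    (hX : c ≤ ∑ j, X s j ^ 2) (hXY : frobSq (X - Y) < c) : Y s ≠ 0 := by
  intro hY
  have hrow := rowSq_le_frobSq (X - Y) s
  simp only [Matrix.sub_apply, hY, Pi.zero_apply, sub_zero] at hrow
  linarith

theorem rowSupport_eq_of_frobSq_sub_lt {X Y : Matrix (Fin m) (Fin n) ℝ} {c : ℝ}
    (hX : ∀ s, X s ≠ 0 → c ≤ ∑ j, X s j ^ 2) (hY : ∀ s, Y s ≠ 0 → c ≤ ∑ j, Y s j ^ 2)
    (hXY : frobSq (X - Y) < c) : rowSupport X = rowSupport Y := by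
  ext s
  simp only [mem_rowSupport]
  exact ⟨fun h => ne_zero_of_frobSq_sub_lt (hX s h) hXY,
    fun h => ne_zero_of_frobSq_sub_lt (hY s h) (frobSq_sub_comm X Y ▸ hXY)⟩

def restrictRows (S : Finset (Fin m)) (X : Matrix (Fin m) (Fin n) ℝ) : Matrix (Fin m) (Fin n) ℝ :=
  Matrix.of fun i j => if i ∈ S then X i j else 0

theorem frobSq_restrictRows_sub_le (S : Finset (Fin m)) (X Y : Matrix (Fin m) (Fin n) ℝ) :
    frobSq (restrictRows S X - restrictRows S Y) ≤ frobSq (X - Y) := by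
  refine Finset.sum_le_sum fun i _ => ?_
  by_cases hi : i ∈ S
  · simp [restrictRows, hi]
  · simpa [restrictRows, hi] using Finset.sum_nonneg fun j _ => sq_nonneg ((X - Y) i j)

theorem ProxSet.eq_restrictRows (hβ : 0 < β) (hlam : 0 ≤ lam)
    (hW : W ∈ ProxSet β (fun W => lam * norm02 W) H) : W = restrictRows (rowSupport W) H := by
  ext i j
  by_cases hi : W i = 0
  · simp [restrictRows, mem_rowSupport, hi]
  · simp [restrictRows, mem_rowSupport.2 hi, ProxSet.row_eq hβ hlam hW hi]

theorem lowerSemicontinuous_mul_norm02 (hlam : 0 ≤ lam) :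
    LowerSemicontinuous fun W : Matrix (Fin m) (Fin n) ℝ => lam * norm02 W := by
  have hsum : (fun W : Matrix (Fin m) (Fin n) ℝ => lam * norm02 W)
      = fun W => ∑ s, {W : Matrix (Fin m) (Fin n) ℝ | W s ≠ 0}.indicator (fun _ => lam) W := by
    funext W
    simp [norm02, Finset.card_filter, Set.indicator_apply, Finset.mul_sum]
  rw [hsum]
  exact lowerSemicontinuous_sum fun s _ =>
    (isOpen_ne_fun (continuous_apply s) continuous_const).lowerSemicontinuous_indicator hlam

theorem isClosed_setOf_mem_ProxSet {G : Matrix (Fin m) (Fin n) ℝ → ℝ}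
    (hG : LowerSemicontinuous G) :
    IsClosed {WH : Matrix (Fin m) (Fin n) ℝ × Matrix (Fin m) (Fin n) ℝ |
      WH.1 ∈ ProxSet β G WH.2} := by
  have hfrobSq : Continuous (frobSq : Matrix (Fin m) (Fin n) ℝ → ℝ) := by
    unfold frobSq; fun_prop
  have hset : {WH : Matrix (Fin m) (Fin n) ℝ × Matrix (Fin m) (Fin n) ℝ | WH.1 ∈ ProxSet β G WH.2}
      = ⋂ Z, (fun WH : Matrix (Fin m) (Fin n) ℝ × Matrix (Fin m) (Fin n) ℝ =>
          G WH.1 + 1 / (2 * β) * frobSq (WH.1 - WH.2) - 1 / (2 * β) * frobSq (Z - WH.2))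
          ⁻¹' Set.Iic (G Z) := by
    ext WH
    simp only [ProxSet, Set.mem_ofPred_eq, Set.mem_iInter, Set.mem_preimage, Set.mem_Iic,
      sub_le_iff_le_add]
  rw [hset]
  refine isClosed_iInter fun Z => LowerSemicontinuous.isClosed_preimage ?_ _
  exact ((hG.comp continuous_fst).add (by fun_prop : Continuous _).lowerSemicontinuous).add
    (by fun_prop : Continuous _).lowerSemicontinuous

theorem mem_ProxSet_of_tendsto {G : Matrix (Fin m) (Fin n) ℝ → ℝ} (hG : LowerSemicontinuous G)
    {Ws Hs : ℕ → Matrix (Fin m) (Fin n) ℝ} {W₀ H₀ : Matrix (Fin m) (Fin n) ℝ}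
    (hW : Tendsto Ws atTop (𝓝 W₀)) (hH : Tendsto Hs atTop (𝓝 H₀))
    (hmem : ∀ k, Ws k ∈ ProxSet β G (Hs k)) : W₀ ∈ ProxSet β G H₀ :=
  (isClosed_setOf_mem_ProxSet hG).mem_of_tendsto (hW.prodMk_nhds hH) (Eventually.of_forall hmem)

end RowSparsity

noncomputable def forwardStep {p m n : ℕ} (U : Matrix (Fin p) (Fin n) ℝ)
    (V : Matrix (Fin p) (Fin m) ℝ) (τ γ β : ℝ) (X : Matrix (Fin m) (Fin n) ℝ) :
    Matrix (Fin m) (Fin n) ℝ :=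
  X - β • gradPsi τ γ U V X

theorem continuous_forwardStep {p m n : ℕ} (U : Matrix (Fin p) (Fin n) ℝ)
    (V : Matrix (Fin p) (Fin m) ℝ) (τ γ β : ℝ) : Continuous (forwardStep U V τ γ β) := by
  unfold forwardStep gradPsi
  fun_prop

section ProximalGradient

open scoped Matrix.Norms.Frobenius RealInnerProductSpace

attribute [local instance] Matrix.frobeniusInnerProductSpace

variable {p m n : ℕ} {τ γ : ℝ} (U : Matrix (Fin p) (Fin n) ℝ) (V : Matrix (Fin p) (Fin m) ℝ)

theorem frobSq_eq_norm_sq (W : Matrix (Fin m) (Fin n) ℝ) : frobSq W = ‖W‖ ^ 2 :=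
  (Matrix.frobenius_norm_sq_eq W).symm

def hessPsi (τ γ : ℝ) (D : Matrix (Fin m) (Fin n) ℝ) : Matrix (Fin m) (Fin n) ℝ :=
  τ • (Vᵀ * (V * D)) + γ • D

theorem gradPsi_sub_gradPsi (X Y : Matrix (Fin m) (Fin n) ℝ) :
    gradPsi τ γ U V X - gradPsi τ γ U V Y = hessPsi V τ γ (X - Y) := by
  simp only [gradPsi, hessPsi, Matrix.mul_sub, smul_sub]
  abel

theorem inner_hessPsi (D : Matrix (Fin m) (Fin n) ℝ) :
    ⟪D, hessPsi V τ γ D⟫ = τ * ‖V * D‖ ^ 2 + γ * ‖D‖ ^ 2 := by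
  rw [hessPsi, inner_add_right, inner_smul_right, inner_smul_right, real_inner_comm,
    Matrix.frobenius_inner_transpose_mul, real_inner_self_eq_norm_sq, real_inner_self_eq_norm_sq]

theorem norm_hessPsi_sq_le (hτ : 0 ≤ τ) (hγ : 0 ≤ γ) (D : Matrix (Fin m) (Fin n) ℝ) :
    ‖hessPsi V τ γ D‖ ^ 2 ≤ (τ * specNorm V ^ 2 + γ) * ⟪D, hessPsi V τ γ D⟫ := by
  have hVtV : ‖Vᵀ * (V * D)‖ ≤ specNorm V * ‖V * D‖ := by
    simpa [specNorm_transpose] using Matrix.frobenius_norm_mul_le_specNorm Vᵀ (V * D)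
  have hV : ‖V * D‖ ≤ specNorm V * ‖D‖ := Matrix.frobenius_norm_mul_le_specNorm V D
  have hVtV2 := pow_le_pow_left₀ (norm_nonneg _) hVtV 2
  have hV2 := pow_le_pow_left₀ (norm_nonneg _) hV 2
  rw [mul_pow] at hVtV2 hV2
  rw [inner_hessPsi, hessPsi, norm_add_sq_real, norm_smul, norm_smul, inner_smul_left,
    inner_smul_right, Matrix.frobenius_inner_transpose_mul, real_inner_self_eq_norm_sq,
    Real.norm_eq_abs, Real.norm_eq_abs, abs_of_nonneg hτ, abs_of_nonneg hγ]
  simp only [conj_trivial]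
  nlinarith [mul_le_mul_of_nonneg_left hVtV2 (sq_nonneg τ),
    mul_le_mul_of_nonneg_left hV2 (mul_nonneg hτ hγ)]

theorem Psi_add (X D : Matrix (Fin m) (Fin n) ℝ) :
    Psi τ γ U V (X + D) = Psi τ γ U V X + ⟪gradPsi τ γ U V X, D⟫ + ⟪D, hessPsi V τ γ D⟫ / 2 := by
  have hres : U - V * (X + D) = (U - V * X) - V * D := by rw [Matrix.mul_add, sub_add_eq_sub_sub]
  rw [Psi, Psi, frobSq_eq_norm_sq, frobSq_eq_norm_sq, frobSq_eq_norm_sq, frobSq_eq_norm_sq, hres,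
    norm_sub_sq_real, norm_add_sq_real, inner_hessPsi, gradPsi, inner_add_left, inner_smul_left,
    inner_smul_left, Matrix.frobenius_inner_transpose_mul, ← neg_sub (V * X) U, inner_neg_left]
  simp only [conj_trivial]
  ring

theorem Psi_add_le (hτ : 0 ≤ τ) (X D : Matrix (Fin m) (Fin n) ℝ) :
    Psi τ γ U V (X + D) ≤
      Psi τ γ U V X + ⟪gradPsi τ γ U V X, D⟫ + (τ * specNorm V ^ 2 + γ) / 2 * ‖D‖ ^ 2 := by
  have hV := pow_le_pow_left₀ (norm_nonneg _) (Matrix.frobenius_norm_mul_le_specNorm V D) 2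
  rw [mul_pow] at hV
  rw [Psi_add, inner_hessPsi]
  nlinarith [mul_le_mul_of_nonneg_left hV hτ]

theorem Psi_nonneg (hτ : 0 ≤ τ) (hγ : 0 ≤ γ) (W : Matrix (Fin m) (Fin n) ℝ) :
    0 ≤ Psi τ γ U V W := by
  rw [Psi, frobSq_eq_norm_sq, frobSq_eq_norm_sq]
  positivity

theorem norm_forwardStep_sub_sq_le {β : ℝ} (hτ : 0 ≤ τ) (hγ : 0 ≤ γ) (hβ : 0 ≤ β)
    (hβL : β * (τ * specNorm V ^ 2 + γ) ≤ 2) (X Y : Matrix (Fin m) (Fin n) ℝ) :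
    ‖forwardStep U V τ γ β X - forwardStep U V τ γ β Y‖ ^ 2 ≤
      (1 - β * γ * (2 - β * (τ * specNorm V ^ 2 + γ))) * ‖X - Y‖ ^ 2 := by
  have hsplit : forwardStep U V τ γ β X - forwardStep U V τ γ β Y
      = (X - Y) - β • hessPsi V τ γ (X - Y) := by
    rw [forwardStep, forwardStep, ← gradPsi_sub_gradPsi U, smul_sub]
    abel
  rw [hsplit]
  refine norm_sub_smul_sq_le hβ hβL ?_ (norm_hessPsi_sq_le V hτ hγ _)
  rw [inner_hessPsi]
  nlinarith [mul_nonneg hτ (sq_nonneg ‖V * (X - Y)‖)]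

theorem contractingWith_restrictRows_forwardStep {β : ℝ} (hτ : 0 ≤ τ) (hγ : 0 < γ) (hβ : 0 < β)
    (hβL : β * (τ * specNorm V ^ 2 + γ) < 2) (S : Finset (Fin m)) :
    ContractingWith (√(1 - β * γ * (2 - β * (τ * specNorm V ^ 2 + γ)))).toNNReal
      (restrictRows S ∘ forwardStep U V τ γ β) := by
  set q := 1 - β * γ * (2 - β * (τ * specNorm V ^ 2 + γ))
  constructor
  · rw [Real.toNNReal_lt_one, Real.sqrt_lt' one_pos]
    nlinarith [mul_pos (mul_pos hβ hγ) (sub_pos.2 hβL)]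
  refine LipschitzWith.of_dist_le_mul fun X Y => ?_
  set D := forwardStep U V τ γ β X - forwardStep U V τ γ β Y
  have hrestrict : ‖restrictRows S (forwardStep U V τ γ β X)
      - restrictRows S (forwardStep U V τ γ β Y)‖ ≤ ‖D‖ := by
    rw [← sq_le_sq₀ (norm_nonneg _) (norm_nonneg _), ← frobSq_eq_norm_sq, ← frobSq_eq_norm_sq]
    exact frobSq_restrictRows_sub_le S _ _
  rw [dist_eq_norm, dist_eq_norm, Real.coe_toNNReal _ (Real.sqrt_nonneg _)]
  calc _ ≤ ‖D‖ := hrestrict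
    _ = √(‖D‖ ^ 2) := (Real.sqrt_sq (norm_nonneg _)).symm
    _ ≤ √(q * ‖X - Y‖ ^ 2) :=
        Real.sqrt_le_sqrt (norm_forwardStep_sub_sq_le U V hτ hγ.le hβ.le hβL.le X Y)
    _ = √q * ‖X - Y‖ := by rw [Real.sqrt_mul' _ (sq_nonneg _), Real.sqrt_sq (norm_nonneg _)]

variable {U V} {lam β : ℝ} {W : ℕ → Matrix (Fin m) (Fin n) ℝ}

theorem tendsto_frobSq_succ_sub_of_proxGrad (hτ : 0 ≤ τ) (hγ : 0 ≤ γ) (hlam : 0 ≤ lam)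
    (hβ : 0 < β) (hβL : β * (τ * specNorm V ^ 2 + γ) < 1)
    (hW : ∀ k, W (k + 1) ∈ ProxSet β (fun W => lam * norm02 W) (forwardStep U V τ γ β (W k))) :
    Tendsto (fun k => frobSq (W (k + 1) - W k)) atTop (𝓝 0) := by
  set L := τ * specNorm V ^ 2 + γ
  have hc : 0 < 1 / (2 * β) - L / 2 := by
    rw [sub_pos, div_lt_div_iff₀ two_pos (by positivity)]
    nlinarith
  refine tendsto_zero_of_add_mul_le (F := fun k => Psi τ γ U V (W k) + lam * norm02 (W k)) hc
    (fun k => add_nonneg (Psi_nonneg U V hτ hγ _) (mul_nonneg hlam (Nat.cast_nonneg _)))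
    (fun k => by rw [frobSq_eq_norm_sq]; positivity) fun k => ?_
  have hdescent := Psi_add_le U V (γ := γ) hτ (W k) (W (k + 1) - W k)
  rw [add_sub_cancel] at hdescent
  have hprox := hW k (W k)
  simp only [forwardStep, frobSq_eq_norm_sq] at hprox
  have := proxGrad_sufficient_decrease (h := fun W => lam * norm02 W) hβ hdescent hprox
  rw [frobSq_eq_norm_sq]
  linarith

theorem exists_rowSupport_eventually_eq (hτ : 0 ≤ τ) (hγ : 0 ≤ γ) (hlam : 0 < lam)
    (hβ : 0 < β) (hβL : β * (τ * specNorm V ^ 2 + γ) < 1)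
    (hW : ∀ k, W (k + 1) ∈ ProxSet β (fun W => lam * norm02 W) (forwardStep U V τ γ β (W k))) :
    ∃ N S, ∀ k ≥ N, rowSupport (W k) = S := by
  obtain ⟨N, hN⟩ := eventually_atTop.1 <|
    (tendsto_frobSq_succ_sub_of_proxGrad hτ hγ hlam.le hβ hβL hW).eventually
      (gt_mem_nhds (by positivity : 0 < 2 * β * lam))
  have hrow : ∀ k s, W (k + 1) s ≠ 0 → 2 * β * lam ≤ ∑ j, W (k + 1) s j ^ 2 :=
    fun k _ => ProxSet.le_rowSq hβ hlam.le (hW k)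
  refine ⟨N + 1, rowSupport (W (N + 1)), fun k hk => ?_⟩
  induction k, hk using Nat.le_induction with
  | base => rfl
  | succ k hk ih =>
    obtain ⟨j, rfl⟩ : ∃ j, k = j + 1 := ⟨k - 1, by omega⟩
    rw [← ih]
    exact rowSupport_eq_of_frobSq_sub_lt (hrow (j + 1)) (hrow j) (hN (j + 1) (by omega))

theorem exists_tendsto_of_proxGrad (hτ : 0 ≤ τ) (hγ : 0 < γ) (hlam : 0 < lam)
    (hβ : 0 < β) (hβL : β * (τ * specNorm V ^ 2 + γ) < 1)
    (hW : ∀ k, W (k + 1) ∈ ProxSet β (fun W => lam * norm02 W) (forwardStep U V τ γ β (W k))) :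
    ∃ Wstar, Tendsto W atTop (𝓝 Wstar) := by
  obtain ⟨N, S, hS⟩ := exists_rowSupport_eventually_eq hτ hγ.le hlam hβ hβL hW
  refine (contractingWith_restrictRows_forwardStep U V hτ hγ hβ (by linarith) S)
    |>.exists_tendsto_of_eventually_eq (N := N) fun k hk => ?_
  rw [Function.comp_apply, ← hS (k + 1) (by omega)]
  exact ProxSet.eq_restrictRows hβ hlam.le (hW k)

end ProximalGradient

/-- for `β ∈ (0, 1/(τ‖V‖₂² + γ))`, any sequence generated by the
proximal gradient iteration `W^{ℓ+1} ∈ Prox_{βλ‖·‖_{0,2}}(W^ℓ − β∇Ψ(W^ℓ))` converges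
(as a whole sequence) to a P-stationary point of `min_W Ψ(W) + λ‖W‖_{0,2}`. -/
theorem PGM_whole_sequence_convergence
    (p m n : ℕ) (τ γ lam β : ℝ) (hτ : 0 < τ) (hγ : 0 < γ) (hlam : 0 < lam)
    (U : Matrix (Fin p) (Fin n) ℝ) (V : Matrix (Fin p) (Fin m) ℝ)
    (hβ0 : 0 < β) (hβ1 : β < 1 / (τ * specNorm V ^ 2 + γ))
    (Wseq : ℕ → Matrix (Fin m) (Fin n) ℝ)
    (hiter : ∀ ℓ : ℕ, Wseq (ℓ + 1) ∈ ProxSet β (fun W => lam * norm02 W)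
        (Wseq ℓ - β • gradPsi τ γ U V (Wseq ℓ))) :
    ∃ Wstar : Matrix (Fin m) (Fin n) ℝ,
      Tendsto Wseq atTop (𝓝 Wstar) ∧
      Wstar ∈ ProxSet β (fun W => lam * norm02 W)
        (Wstar - β • gradPsi τ γ U V Wstar) := by
  have hβL : β * (τ * specNorm V ^ 2 + γ) < 1 := by
    rwa [lt_div_iff₀ (by positivity)] at hβ1
  obtain ⟨Wstar, hlim⟩ := exists_tendsto_of_proxGrad hτ.le hγ hlam hβ0 hβL hiter
  refine ⟨Wstar, hlim, mem_ProxSet_of_tendsto (lowerSemicontinuous_mul_norm02 hlam.le)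
    (Ws := fun k => Wseq (k + 1)) (hlim.comp (tendsto_add_atTop_nat 1))
    (((continuous_forwardStep U V τ γ β).tendsto Wstar).comp hlim) hiter⟩
end

section
/- Let β > 0, λ > 0, Θ ∈ ℝ^{m×n}, and suppose W⁺ ∈ ℝ^{m×n} satisfies the fixed-point inclusion W⁺ ∈ Prox_{βλ‖·‖_{2,0}}(W⁺ − βΘ). Then for every W ∈ ℝ^{m×n}: ⟨Θ, W⁺ − W⟩ + λ(‖W⁺‖_{2,0} − ‖W‖_{2,0}) ≤ (1/(2β))‖W⁺ − W‖². -/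
set_option autoImplicit false

open Matrix

/-- The Frobenius inner product `⟨A, B⟩ = Σ_{ij} A_{ij} B_{ij}`. -/
noncomputable def frobInner {m n : ℕ} (A B : Matrix (Fin m) (Fin n) ℝ) : ℝ :=
  ∑ i, ∑ j, A i j * B i j

open Classical in
/-- `‖W‖_{2,0}`: the number of nonzero columns of `W`, as a real number. -/
noncomputable def norm20 {m n : ℕ} (W : Matrix (Fin m) (Fin n) ℝ) : ℝ :=
  ((Finset.univ.filter fun j : Fin n => Wᵀ j ≠ 0).card : ℝ)

/-! Test the minimality of `W⁺` in the prox objective against an arbitrary `W`: expanding the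
squares around the centre `W⁺ − βΘ`, both sides carry the same `β²‖Θ‖²/(2β)` term, and the cross
term on the right is exactly `−⟨Θ, W⁺ − W⟩`. -/

lemma frobSq_smul {m n : ℕ} (c : ℝ) (A : Matrix (Fin m) (Fin n) ℝ) :
    frobSq (c • A) = c ^ 2 * frobSq A := by
  simp only [frobSq, Finset.mul_sum, Matrix.smul_apply, smul_eq_mul, mul_pow]

lemma frobSq_smul_sub {m n : ℕ} (c : ℝ) (A B : Matrix (Fin m) (Fin n) ℝ) :
    frobSq (c • A - B) = c ^ 2 * frobSq A - 2 * c * frobInner A B + frobSq B := by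
  simp only [frobSq, frobInner, Finset.mul_sum, ← Finset.sum_sub_distrib, ← Finset.sum_add_distrib]
  refine Finset.sum_congr rfl fun i _ => Finset.sum_congr rfl fun j _ => ?_
  simp only [Matrix.sub_apply, Matrix.smul_apply, smul_eq_mul]
  ring

lemma frobInner_add_sub_le_of_mem_proxSet {m n : ℕ} {β : ℝ} (hβ : β ≠ 0)
    {G : Matrix (Fin m) (Fin n) ℝ → ℝ} {Θ Wplus : Matrix (Fin m) (Fin n) ℝ}
    (hfix : Wplus ∈ ProxSet β G (Wplus - β • Θ)) (W : Matrix (Fin m) (Fin n) ℝ) :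
    frobInner Θ (Wplus - W) + (G Wplus - G W) ≤ (1 / (2 * β)) * frobSq (Wplus - W) := by
  have hmin := hfix W
  rw [sub_sub_cancel, show W - (Wplus - β • Θ) = β • Θ - (Wplus - W) by abel, frobSq_smul,
    frobSq_smul_sub] at hmin
  have hexpand : 1 / (2 * β) * (β ^ 2 * frobSq Θ - 2 * β * frobInner Θ (Wplus - W)
      + frobSq (Wplus - W)) = 1 / (2 * β) * (β ^ 2 * frobSq Θ) - frobInner Θ (Wplus - W)
      + 1 / (2 * β) * frobSq (Wplus - W) := by
    field_simp
  linarith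

theorem prox_fixed_point_inequality_general
    (m n : ℕ) (β lam : ℝ) (hβ : 0 < β)
    (Θ Wplus : Matrix (Fin m) (Fin n) ℝ)
    (hfix : Wplus ∈ ProxSet β (fun Z => lam * norm20 Z) (Wplus - β • Θ)) :
    ∀ W : Matrix (Fin m) (Fin n) ℝ,
      frobInner Θ (Wplus - W) + lam * (norm20 Wplus - norm20 W) ≤
        (1 / (2 * β)) * frobSq (Wplus - W) := by
  intro W
  rw [mul_sub]
  exact frobInner_add_sub_le_of_mem_proxSet hβ.ne' hfix W

/-- if `W⁺ ∈ Prox_{βλ‖·‖_{2,0}}(W⁺ − βΘ)`, then for every `W`,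
`⟨Θ, W⁺ − W⟩ + λ(‖W⁺‖_{2,0} − ‖W‖_{2,0}) ≤ (1/(2β))‖W⁺ − W‖²`. -/
theorem prox_fixed_point_inequality
    (m n : ℕ) (β lam : ℝ) (hβ : 0 < β) (hlam : 0 < lam)
    (Θ Wplus : Matrix (Fin m) (Fin n) ℝ)
    (hfix : Wplus ∈ ProxSet β (fun Z => lam * norm20 Z) (Wplus - β • Θ)) :
    ∀ W : Matrix (Fin m) (Fin n) ℝ,
      frobInner Θ (Wplus - W) + lam * (norm20 Wplus - norm20 W) ≤
        (1 / (2 * β)) * frobSq (Wplus - W) :=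
  prox_fixed_point_inequality_general m n β lam hβ Θ Wplus hfix
end
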